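/- arXiv:1906.07413 — 4 statements merged into one kernel-verified Lean document; each statement's English description precedes it below -/
import Mathlib

section
/- For all real numbers n₁, n₂ > 0 and β > 0, the point (γ₁*, γ₂*) with γ₁* = β·n₂^{1/4}/(n₁^{1/4} + n₂^{1/4}) and γ₂* = β·n₁^{1/4}/(n₁^{1/4} + n₂^{1/4}) is feasible (γ₁*, γ₂* > 0 and γ₁* + γ₂* = β) and minimizes the objective: for all γ₁ > 0, γ₂ > 0 with γ₁ + γ₂ = β, one has 1/(γ₁*·√n₁) + 1/(γ₂*·√n₂) ≤ 1/(γ₁·√n₁) + 1/(γ₂·√n₂). -/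
/-!
Put `a = n₁^{1/4}` and `b = n₂^{1/4}`, so that `√n₁ = a²` and `√n₂ = b²`. Writing the objective
as `(b²/γ₁ + a²/γ₂) / (a²b²)`, Sedrakyan's (Titu's) inequality bounds it below by
`(a + b)² / (β a² b²)` whenever `γ₁ + γ₂ = β`, with equality when `γ₁ : γ₂ = b : a`, which is
the claimed point.
-/

open Real

theorem Real.sqrt_eq_rpow_one_div_four_sq {x : ℝ} (hx : 0 ≤ x) :
    √x = (x ^ ((1 : ℝ) / 4)) ^ 2 := by
  rw [← rpow_natCast, ← rpow_mul hx, sqrt_eq_rpow]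
  norm_num

theorem sq_add_div_add_le_sq_div_add_sq_div {u v x y : ℝ} (hx : 0 < x) (hy : 0 < y) :
    (u + v) ^ 2 / (x + y) ≤ u ^ 2 / x + v ^ 2 / y := by
  simpa [Fin.sum_univ_two] using Finset.sq_sum_div_le_sum_sq_div Finset.univ ![u, v]
    (g := ![x, y]) (by simp [Fin.forall_fin_two, hx, hy])

theorem sq_add_div_mul_sq_mul_sq_le_one_div_mul_sq_add_one_div_mul_sq {a b γ₁ γ₂ : ℝ}
    (ha : 0 < a) (hb : 0 < b) (hγ₁ : 0 < γ₁) (hγ₂ : 0 < γ₂) :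
    (a + b) ^ 2 / ((γ₁ + γ₂) * a ^ 2 * b ^ 2) ≤
      1 / (γ₁ * a ^ 2) + 1 / (γ₂ * b ^ 2) := by
  have hrw : 1 / (γ₁ * a ^ 2) + 1 / (γ₂ * b ^ 2) =
      (b ^ 2 / γ₁ + a ^ 2 / γ₂) / (a ^ 2 * b ^ 2) := by
    field_simp
  rw [hrw, mul_assoc, ← div_div, add_comm a b]
  gcongr
  exact sq_add_div_add_le_sq_div_add_sq_div hγ₁ hγ₂

theorem one_div_mul_sq_add_one_div_mul_sq_of_proportional {a b β : ℝ}
    (ha : 0 < a) (hb : 0 < b) (hβ : β ≠ 0) :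
    1 / (β * b / (a + b) * a ^ 2) + 1 / (β * a / (a + b) * b ^ 2) =
      (a + b) ^ 2 / (β * a ^ 2 * b ^ 2) := by
  have : a + b ≠ 0 := by positivity
  field_simp
  ring

/-- For n₁, n₂ > 0 and β > 0, the point (γ₁*, γ₂*) with
γ₁* = β·n₂^{1/4}/(n₁^{1/4} + n₂^{1/4}) and γ₂* = β·n₁^{1/4}/(n₁^{1/4} + n₂^{1/4})
is feasible and minimizes 1/(γ₁·√n₁) + 1/(γ₂·√n₂) subject to γ₁, γ₂ > 0, γ₁ + γ₂ = β. -/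
theorem optimal_margin_tradeoff_feasible_and_minimizes
    (n₁ n₂ β : ℝ) (hn₁ : 0 < n₁) (hn₂ : 0 < n₂) (hβ : 0 < β) :
    0 < β * n₂ ^ ((1 : ℝ) / 4) / (n₁ ^ ((1 : ℝ) / 4) + n₂ ^ ((1 : ℝ) / 4)) ∧
    0 < β * n₁ ^ ((1 : ℝ) / 4) / (n₁ ^ ((1 : ℝ) / 4) + n₂ ^ ((1 : ℝ) / 4)) ∧
    β * n₂ ^ ((1 : ℝ) / 4) / (n₁ ^ ((1 : ℝ) / 4) + n₂ ^ ((1 : ℝ) / 4)) +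
      β * n₁ ^ ((1 : ℝ) / 4) / (n₁ ^ ((1 : ℝ) / 4) + n₂ ^ ((1 : ℝ) / 4)) = β ∧
    ∀ γ₁ γ₂ : ℝ, 0 < γ₁ → 0 < γ₂ → γ₁ + γ₂ = β →
      1 / (β * n₂ ^ ((1 : ℝ) / 4) / (n₁ ^ ((1 : ℝ) / 4) + n₂ ^ ((1 : ℝ) / 4)) * Real.sqrt n₁) +
        1 / (β * n₁ ^ ((1 : ℝ) / 4) / (n₁ ^ ((1 : ℝ) / 4) + n₂ ^ ((1 : ℝ) / 4)) * Real.sqrt n₂) ≤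
      1 / (γ₁ * Real.sqrt n₁) + 1 / (γ₂ * Real.sqrt n₂) := by
  rw [sqrt_eq_rpow_one_div_four_sq hn₁.le, sqrt_eq_rpow_one_div_four_sq hn₂.le]
  set a := n₁ ^ ((1 : ℝ) / 4)
  set b := n₂ ^ ((1 : ℝ) / 4)
  have ha : 0 < a := rpow_pos_of_pos hn₁ _
  have hb : 0 < b := rpow_pos_of_pos hn₂ _
  refine ⟨by positivity, by positivity, ?_, fun γ₁ γ₂ hγ₁ hγ₂ hsum ↦ ?_⟩
  · rw [← add_div, ← mul_add, add_comm b a, mul_div_cancel_right₀ _ (by positivity)]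
  · rw [one_div_mul_sq_add_one_div_mul_sq_of_proportional ha hb hβ.ne', ← hsum]
    exact sq_add_div_mul_sq_mul_sq_le_one_div_mul_sq_add_one_div_mul_sq ha hb hγ₁ hγ₂
end

section
/- Let n₁, n₂ > 0 be real numbers and let γ₁, γ₂ > 0. If for every δ with -γ₂ < δ < γ₁ one has 1/(γ₁·√n₁) + 1/(γ₂·√n₂) ≤ 1/((γ₁ - δ)·√n₁) + 1/((γ₂ + δ)·√n₂), then there exists a constant C > 0 such that γ₁ = C·n₁^{-1/4} and γ₂ = C·n₂^{-1/4}. -/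
open Real

/-! At a stationary point of the shifted cost the derivative in `δ` vanishes, i.e.
`1/(γ₁²√n₁) = 1/(γ₂²√n₂)`. Hence `γ₁²√n₁ = γ₂²√n₂`, and taking square roots,
`γ₁ n₁^{1/4} = γ₂ n₂^{1/4}`; this common value is the constant `C`. -/

/-- The objective after shifting the boundary by `δ`, with `a = √n₁` and `b = √n₂`. -/
noncomputable def shiftedCost (a b γ₁ γ₂ δ : ℝ) : ℝ :=
  1 / ((γ₁ - δ) * a) + 1 / ((γ₂ + δ) * b)

section ShiftedCost

variable {a b γ₁ γ₂ : ℝ}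

theorem hasDerivAt_shiftedCost_zero (ha : a ≠ 0) (hb : b ≠ 0) (hγ₁ : γ₁ ≠ 0) (hγ₂ : γ₂ ≠ 0) :
    HasDerivAt (shiftedCost a b γ₁ γ₂) (1 / (γ₁ ^ 2 * a) - 1 / (γ₂ ^ 2 * b)) 0 := by
  have h₁ : HasDerivAt (fun δ : ℝ => (γ₁ - δ) * a) (-a) 0 := by
    simpa using ((hasDerivAt_id (0 : ℝ)).const_sub γ₁).mul_const a
  have h₂ : HasDerivAt (fun δ : ℝ => (γ₂ + δ) * b) b 0 := by
    simpa using ((hasDerivAt_id (0 : ℝ)).const_add γ₂).mul_const b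
  have h := (h₁.inv (by simpa using mul_ne_zero hγ₁ ha)).add
    (h₂.inv (by simpa using mul_ne_zero hγ₂ hb))
  have hcost : shiftedCost a b γ₁ γ₂ = (fun δ => (γ₁ - δ) * a)⁻¹ + (fun δ => (γ₂ + δ) * b)⁻¹ := by
    funext δ
    simp only [shiftedCost, one_div, Pi.add_apply, Pi.inv_apply]
  have hslope : - -a / ((γ₁ - 0) * a) ^ 2 + -b / ((γ₂ + 0) * b) ^ 2
      = 1 / (γ₁ ^ 2 * a) - 1 / (γ₂ ^ 2 * b) := by
    rw [sub_zero, add_zero, neg_neg, neg_div, ← sub_eq_add_neg]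
    field_simp
  rwa [hcost, ← hslope]

theorem sq_mul_eq_of_isLocalMin_shiftedCost (ha : a ≠ 0) (hb : b ≠ 0) (hγ₁ : γ₁ ≠ 0)
    (hγ₂ : γ₂ ≠ 0) (hmin : IsLocalMin (shiftedCost a b γ₁ γ₂) 0) :
    γ₁ ^ 2 * a = γ₂ ^ 2 * b := by
  have hzero := hmin.hasDerivAt_eq_zero
    (hasDerivAt_shiftedCost_zero ha hb hγ₁ hγ₂)
  have : 1 / (γ₁ ^ 2 * a) = 1 / (γ₂ ^ 2 * b) := sub_eq_zero.mp hzero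
  rwa [one_div, one_div, inv_inj] at this

end ShiftedCost

theorem rpow_one_div_four_sq {n : ℝ} (hn : 0 ≤ n) : (n ^ ((1 : ℝ) / 4)) ^ 2 = √n := by
  rw [← rpow_natCast, ← rpow_mul hn, sqrt_eq_rpow]
  norm_num

theorem eq_mul_rpow_neg_one_div_four_iff {n γ C : ℝ} (hn : 0 < n) :
    γ = C * n ^ (-(1 : ℝ) / 4) ↔ γ * n ^ ((1 : ℝ) / 4) = C := by
  have hunit : n ^ ((1 : ℝ) / 4) * n ^ (-(1 : ℝ) / 4) = 1 := by
    rw [← rpow_add hn]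
    norm_num
  constructor
  · rintro rfl
    rw [mul_assoc, mul_comm _ (n ^ _), hunit, mul_one]
  · rintro rfl
    rw [mul_assoc, hunit, mul_one]

theorem mul_rpow_one_div_four_eq_of_sq_mul_sqrt_eq {n₁ n₂ γ₁ γ₂ : ℝ} (hn₁ : 0 ≤ n₁)
    (hn₂ : 0 ≤ n₂) (hγ₁ : 0 ≤ γ₁) (hγ₂ : 0 ≤ γ₂) (h : γ₁ ^ 2 * √n₁ = γ₂ ^ 2 * √n₂) :
    γ₁ * n₁ ^ ((1 : ℝ) / 4) = γ₂ * n₂ ^ ((1 : ℝ) / 4) := by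
  refine (pow_left_inj₀ (by positivity) (by positivity) two_ne_zero).mp ?_
  rwa [mul_pow, mul_pow, rpow_one_div_four_sq hn₁, rpow_one_div_four_sq hn₂]

/-- If shifting the decision boundary cannot improve the objective, i.e. for every δ with
-γ₂ < δ < γ₁ one has 1/(γ₁·√n₁) + 1/(γ₂·√n₂) ≤ 1/((γ₁-δ)·√n₁) + 1/((γ₂+δ)·√n₂),
then γ₁ = C·n₁^{-1/4} and γ₂ = C·n₂^{-1/4} for some constant C > 0. -/
theorem stationary_margins_are_inv_fourth_root
    (n₁ n₂ : ℝ) (hn₁ : 0 < n₁) (hn₂ : 0 < n₂)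
    (γ₁ γ₂ : ℝ) (hγ₁ : 0 < γ₁) (hγ₂ : 0 < γ₂)
    (hopt : ∀ δ : ℝ, -γ₂ < δ → δ < γ₁ →
      1 / (γ₁ * Real.sqrt n₁) + 1 / (γ₂ * Real.sqrt n₂) ≤
        1 / ((γ₁ - δ) * Real.sqrt n₁) + 1 / ((γ₂ + δ) * Real.sqrt n₂)) :
    ∃ C : ℝ, 0 < C ∧ γ₁ = C * n₁ ^ (-(1 : ℝ) / 4) ∧ γ₂ = C * n₂ ^ (-(1 : ℝ) / 4) := by
  have hmin : IsLocalMin (shiftedCost √n₁ √n₂ γ₁ γ₂) 0 := by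
    filter_upwards [Ioo_mem_nhds (neg_neg_of_pos hγ₂) hγ₁] with δ hδ
    simpa [shiftedCost] using hopt δ hδ.1 hδ.2
  have hstat := sq_mul_eq_of_isLocalMin_shiftedCost (sqrt_pos.mpr hn₁).ne' (sqrt_pos.mpr hn₂).ne'
    hγ₁.ne' hγ₂.ne' hmin
  refine ⟨γ₁ * n₁ ^ ((1 : ℝ) / 4), by positivity,
    (eq_mul_rpow_neg_one_div_four_iff hn₁).mpr rfl, ?_⟩
  rw [eq_mul_rpow_neg_one_div_four_iff hn₂]
  exact (mul_rpow_one_div_four_eq_of_sq_mul_sqrt_eq hn₁.le hn₂.le hγ₁.le hγ₂.le hstat).symm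
end

section
/- For all real numbers n₁, n₂ > 0 and β > 0 (the fast-rate regime, where the per-class generalization bound scales as 1/(γⱼ²·nⱼ)), the minimum of H(γ₁, γ₂) = 1/(γ₁²·n₁) + 1/(γ₂²·n₂) over all γ₁ > 0, γ₂ > 0 with γ₁ + γ₂ = β is attained at γ₁ = β·n₂^{1/3}/(n₁^{1/3} + n₂^{1/3}) and γ₂ = β·n₁^{1/3}/(n₁^{1/3} + n₂^{1/3}); in particular the optimal margins satisfy γⱼ = C·nⱼ^{-1/3} for a constant C > 0. -/
open Real

lemma core_ineq (a b x y : ℝ) (ha : 0 < a) (hb : 0 < b) (hx : 0 < x) (hy : 0 < y) :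
    (a + b) ^ 3 * (x ^ 2 * y ^ 2) ≤ (x + y) ^ 2 * (a ^ 3 * x ^ 2 + b ^ 3 * y ^ 2) := by
  have h1 : 0 ≤ y * (a * x - b * y) ^ 2 * (2 * a * x + b * y) := by positivity
  have h2 : 0 ≤ x * (b * y - a * x) ^ 2 * (a * x + 2 * b * y) := by positivity
  nlinarith [h1, h2]

/-- Fast-rate regime: the minimum of H(γ₁, γ₂) = 1/(γ₁²·n₁) + 1/(γ₂²·n₂) over γ₁, γ₂ > 0
with γ₁ + γ₂ = β is attained at γ₁ = β·n₂^{1/3}/(n₁^{1/3} + n₂^{1/3}) and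
γ₂ = β·n₁^{1/3}/(n₁^{1/3} + n₂^{1/3}); these satisfy γⱼ = C·nⱼ^{-1/3} for some C > 0. -/
theorem fast_rate_optimal_margin_tradeoff
    (n₁ n₂ β : ℝ) (hn₁ : 0 < n₁) (hn₂ : 0 < n₂) (hβ : 0 < β) :
    0 < β * n₂ ^ ((1 : ℝ) / 3) / (n₁ ^ ((1 : ℝ) / 3) + n₂ ^ ((1 : ℝ) / 3)) ∧
    0 < β * n₁ ^ ((1 : ℝ) / 3) / (n₁ ^ ((1 : ℝ) / 3) + n₂ ^ ((1 : ℝ) / 3)) ∧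
    β * n₂ ^ ((1 : ℝ) / 3) / (n₁ ^ ((1 : ℝ) / 3) + n₂ ^ ((1 : ℝ) / 3)) +
      β * n₁ ^ ((1 : ℝ) / 3) / (n₁ ^ ((1 : ℝ) / 3) + n₂ ^ ((1 : ℝ) / 3)) = β ∧
    (∀ γ₁ γ₂ : ℝ, 0 < γ₁ → 0 < γ₂ → γ₁ + γ₂ = β →
      1 / ((β * n₂ ^ ((1 : ℝ) / 3) / (n₁ ^ ((1 : ℝ) / 3) + n₂ ^ ((1 : ℝ) / 3))) ^ 2 * n₁) +
        1 / ((β * n₁ ^ ((1 : ℝ) / 3) / (n₁ ^ ((1 : ℝ) / 3) + n₂ ^ ((1 : ℝ) / 3))) ^ 2 * n₂) ≤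
      1 / (γ₁ ^ 2 * n₁) + 1 / (γ₂ ^ 2 * n₂)) ∧
    ∃ C : ℝ, 0 < C ∧
      β * n₂ ^ ((1 : ℝ) / 3) / (n₁ ^ ((1 : ℝ) / 3) + n₂ ^ ((1 : ℝ) / 3)) =
        C * n₁ ^ (-(1 : ℝ) / 3) ∧
      β * n₁ ^ ((1 : ℝ) / 3) / (n₁ ^ ((1 : ℝ) / 3) + n₂ ^ ((1 : ℝ) / 3)) =
        C * n₂ ^ (-(1 : ℝ) / 3) := by
  set a := n₁ ^ ((1 : ℝ) / 3) with hadef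
  set b := n₂ ^ ((1 : ℝ) / 3) with hbdef
  have ha : 0 < a := rpow_pos_of_pos hn₁ _
  have hb : 0 < b := rpow_pos_of_pos hn₂ _
  have hab : 0 < a + b := by linarith
  have ha3 : a ^ 3 = n₁ := by
    rw [hadef, ← rpow_natCast (n₁ ^ ((1:ℝ)/3)) 3, ← rpow_mul hn₁.le]; norm_num
  have hb3 : b ^ 3 = n₂ := by
    rw [hbdef, ← rpow_natCast (n₂ ^ ((1:ℝ)/3)) 3, ← rpow_mul hn₂.le]; norm_num
  have hγ1 : 0 < β * b / (a + b) := by positivity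
  have hγ2 : 0 < β * a / (a + b) := by positivity
  refine ⟨hγ1, hγ2, by field_simp; ring, ?_, ?_⟩
  · intro γ₁ γ₂ h1 h2 hsum
    rw [← ha3, ← hb3]
    have hL : 1 / ((β * b / (a + b)) ^ 2 * a ^ 3) + 1 / ((β * a / (a + b)) ^ 2 * b ^ 3)
        = (a + b) ^ 3 / (β ^ 2 * a ^ 3 * b ^ 3) := by
      field_simp; ring
    have hR : 1 / (γ₁ ^ 2 * a ^ 3) + 1 / (γ₂ ^ 2 * b ^ 3)
        = (γ₂ ^ 2 * b ^ 3 + γ₁ ^ 2 * a ^ 3) / (γ₁ ^ 2 * a ^ 3 * (γ₂ ^ 2 * b ^ 3)) := by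
      field_simp
    rw [hL, hR, div_le_div_iff₀ (by positivity) (by positivity)]
    have key := core_ineq a b γ₁ γ₂ ha hb h1 h2
    rw [hsum] at key
    nlinarith [mul_le_mul_of_nonneg_left key (le_of_lt (mul_pos (pow_pos ha 3) (pow_pos hb 3)))]
  · refine ⟨β * a * b / (a + b), by positivity, ?_, ?_⟩
    · have : n₁ ^ (-(1 : ℝ) / 3) = a⁻¹ := by
        rw [hadef, ← rpow_neg_one (n₁ ^ ((1:ℝ)/3)), ← rpow_mul hn₁.le]; norm_num
      rw [this]; field_simp
    · have : n₂ ^ (-(1 : ℝ) / 3) = b⁻¹ := by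
        rw [hbdef, ← rpow_neg_one (n₂ ^ ((1:ℝ)/3)), ← rpow_mul hn₂.le]; norm_num
      rw [this]; field_simp
end

section
/- For all real numbers n₁, n₂ > 0 and β > 0, the minimum value of H(γ₁, γ₂) = 1/(γ₁²·n₁) + 1/(γ₂²·n₂) over {(γ₁, γ₂) : γ₁ > 0, γ₂ > 0, γ₁ + γ₂ = β} equals (n₁^{-1/3} + n₂^{-1/3})³/β². -/
/-!
With `aᵢ = nᵢ^{-1/3}` the objective is `a₁³/γ₁² + a₂³/γ₂²`, which by Radon's inequality is at
least `(a₁ + a₂)³/(γ₁ + γ₂)² = (a₁ + a₂)³/β²`, with equality when `γᵢ` is proportional to `aᵢ`.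
-/

open Real

/-- Radon's inequality: Jensen for `u ↦ u ^ (n + 1)` at the points `a / x`, `b / y` with weights
proportional to `x`, `y`. -/
theorem add_pow_succ_div_pow_le (n : ℕ) {a b x y : ℝ} (ha : 0 ≤ a) (hb : 0 ≤ b) (hx : 0 < x)
    (hy : 0 < y) :
    (a + b) ^ (n + 1) / (x + y) ^ n ≤ a ^ (n + 1) / x ^ n + b ^ (n + 1) / y ^ n := by
  have hxy : 0 < x + y := by positivity
  have hjensen := (convexOn_pow (n + 1)).2 (Set.mem_Ici.2 (div_nonneg ha hx.le))
    (Set.mem_Ici.2 (div_nonneg hb hy.le)) (div_nonneg hx.le hxy.le) (div_nonneg hy.le hxy.le)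
    (by field_simp)
  have hmean : x / (x + y) * (a / x) + y / (x + y) * (b / y) = (a + b) / (x + y) := by
    field_simp
  simp only [smul_eq_mul] at hjensen
  rw [hmean, div_pow, div_pow, div_pow] at hjensen
  calc (a + b) ^ (n + 1) / (x + y) ^ n
      = (x + y) * ((a + b) ^ (n + 1) / (x + y) ^ (n + 1)) := by field_simp; ring
    _ ≤ (x + y) * (x / (x + y) * (a ^ (n + 1) / x ^ (n + 1))
          + y / (x + y) * (b ^ (n + 1) / y ^ (n + 1))) := by gcongr
    _ = a ^ (n + 1) / x ^ n + b ^ (n + 1) / y ^ n := by field_simp; ring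

theorem pow_succ_div_mul_pow_add (n : ℕ) {a b t : ℝ} (ha : 0 < a) (hb : 0 < b) (ht : 0 < t) :
    a ^ (n + 1) / (t * a) ^ n + b ^ (n + 1) / (t * b) ^ n
      = (a + b) ^ (n + 1) / (t * a + t * b) ^ n := by
  rw [← mul_add, mul_pow, mul_pow, mul_pow]
  field_simp
  ring

theorem rpow_neg_one_div_natCast_pow {x : ℝ} (hx : 0 ≤ x) {k : ℕ} (hk : k ≠ 0) :
    (x ^ (-(1 : ℝ) / k)) ^ k = x⁻¹ := by
  rw [← rpow_natCast, ← rpow_mul hx, div_mul_cancel₀ _ (Nat.cast_ne_zero.2 hk), rpow_neg_one]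

/-- The minimum value of the fast-rate objective H(γ₁, γ₂) = 1/(γ₁²·n₁) + 1/(γ₂²·n₂) over
{(γ₁, γ₂) : γ₁ > 0, γ₂ > 0, γ₁ + γ₂ = β} equals (n₁^{-1/3} + n₂^{-1/3})³/β². -/
theorem fast_rate_min_value
    (n₁ n₂ β : ℝ) (hn₁ : 0 < n₁) (hn₂ : 0 < n₂) (hβ : 0 < β) :
    IsLeast
      {v : ℝ | ∃ γ₁ γ₂ : ℝ, 0 < γ₁ ∧ 0 < γ₂ ∧ γ₁ + γ₂ = β ∧
        v = 1 / (γ₁ ^ 2 * n₁) + 1 / (γ₂ ^ 2 * n₂)}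
      ((n₁ ^ (-(1 : ℝ) / 3) + n₂ ^ (-(1 : ℝ) / 3)) ^ 3 / β ^ 2) := by
  have hterm : ∀ {γ m : ℝ}, 0 < m → 1 / (γ ^ 2 * m) = (m ^ (-(1 : ℝ) / 3)) ^ 3 / γ ^ 2 := by
    intro γ m hm
    have hcube : (m ^ (-(1 : ℝ) / 3)) ^ 3 = m⁻¹ := by
      exact_mod_cast rpow_neg_one_div_natCast_pow hm.le three_ne_zero
    rw [hcube]
    field_simp
  set a := n₁ ^ (-(1 : ℝ) / 3)
  set b := n₂ ^ (-(1 : ℝ) / 3)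
  have ha : 0 < a := rpow_pos_of_pos hn₁ _
  have hb : 0 < b := rpow_pos_of_pos hn₂ _
  constructor
  · set t := β / (a + b)
    have ht : 0 < t := by positivity
    refine ⟨t * a, t * b, by positivity, by positivity, by simp only [t]; field_simp, ?_⟩
    rw [hterm hn₁, hterm hn₂, pow_succ_div_mul_pow_add 2 ha hb ht, ← mul_add]
    simp only [t]
    field_simp
  · rintro v ⟨γ₁, γ₂, hγ₁, hγ₂, hsum, rfl⟩
    rw [hterm hn₁, hterm hn₂, ← hsum]
    exact add_pow_succ_div_pow_le 2 ha.le hb.le hγ₁ hγ₂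
end
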